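/- arXiv:1801.07140 — 2 statements merged into one kernel-verified Lean document; each statement's English description precedes it below -/
import Mathlib

section
/- Let p ∈ (0,1), λ = 2(1-p)/(2-p), and i > 2 an integer. If h_i satisfies h_i (1-(1-p)^i) = i p^{i-1}(1-p) + (1 - p^i - (1-p)^i - i p^{i-1}(1-p)) λ, then h_i ≥ λ. -/
/-!
Subtracting `λ · (1 - (1-p)^i)` from both sides of the recursion and using `1 - λ = p/(2-p)` leaves
`(h - λ)(1 - (1-p)^i)(2-p) = p^i (1-p)(i-2)`, whose right side is nonnegative for `i ≥ 2`.
-/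

theorem sub_mul_eq_of_hitting_recursion {p lam h : ℝ} {i : ℕ} (hi : 1 ≤ i)
    (hlam : lam * (2 - p) = 2 * (1 - p))
    (hrec : h * (1 - (1 - p) ^ i) =
      (i : ℝ) * p ^ (i - 1) * (1 - p) +
        (1 - p ^ i - (1 - p) ^ i - (i : ℝ) * p ^ (i - 1) * (1 - p)) * lam) :
    (h - lam) * ((1 - (1 - p) ^ i) * (2 - p)) = p ^ i * (1 - p) * ((i : ℝ) - 2) := by
  obtain ⟨n, rfl⟩ := Nat.exists_eq_add_of_le' hi
  rw [Nat.add_sub_cancel] at hrec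
  linear_combination (2 - p) * hrec - (p ^ (n + 1) + (↑(n + 1) : ℝ) * p ^ n * (1 - p)) * hlam

theorem inductive_step_hitting (p : ℝ) (hp : p ∈ Set.Ioo (0:ℝ) 1) (i : ℕ) (hi : i > 2)
    (lam : ℝ) (hlam : lam = 2 * (1 - p) / (2 - p)) (h : ℝ)
    (hrec : h * (1 - (1 - p) ^ i) =
      (i : ℝ) * p ^ (i - 1) * (1 - p) +
        (1 - p ^ i - (1 - p) ^ i - (i : ℝ) * p ^ (i - 1) * (1 - p)) * lam) :
    h ≥ lam := by
  obtain ⟨hp0, hp1⟩ := hp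
  have hlam' : lam * (2 - p) = 2 * (1 - p) := by
    rw [hlam, div_mul_cancel₀]
    linarith
  have hexcess := sub_mul_eq_of_hitting_recursion (by omega) hlam' hrec
  have hD : 0 < (1 - (1 - p) ^ i) * (2 - p) :=
    mul_pos (sub_pos.2 (pow_lt_one₀ (by linarith) (by linarith) (by omega))) (by linarith)
  have hi' : (2 : ℝ) < i := by exact_mod_cast hi
  have hrhs : 0 ≤ p ^ i * (1 - p) * ((i : ℝ) - 2) :=
    mul_nonneg (mul_nonneg (pow_nonneg hp0.le i) (by linarith)) (by linarith)
  rw [← hexcess] at hrhs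
  exact sub_nonneg.1 (nonneg_of_mul_nonneg_left hrhs hD)
end

section
/- For every p ∈ (0,1) and every integer i ≥ 1, the hitting probability h_i of the absorbing state {1} in the binomial decay Markov chain (transitions Pr(j|i) = C(i,j)p^{i-j}(1-p)^j for i>1, states 0 and 1 absorbing) satisfies h_i ≥ 2(1-p)/(2-p), and this bound is tight since h_2 = 2(1-p)/(2-p). -/
/-!
Put `B = 2(1-p)/(2-p)` and `q = 1 - p`. Since the binomial weights `C(i,j) p^(i-j) q^j` sum to one,
`h_i - B` is the same weighted average of the `h_j - B`; moving the `j = i` term to the left gives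
`(1 - q^i)(h_i - B) = ∑_{j<i} C(i,j) p^(i-j) q^j (h_j - B)`. By strong induction the terms with
`2 ≤ j < i` are nonnegative, and the two terms `j = 0, 1` add up to `(i-2) p^i q / (2-p) ≥ 0`.
For `i = 2` the latter vanishes, which is why the bound is attained there.
-/

open Finset

theorem sum_range_choose_mul_pow_mul_one_sub_pow (p : ℝ) (i : ℕ) :
    ∑ j ∈ range (i + 1), (i.choose j : ℝ) * p ^ (i - j) * (1 - p) ^ j = 1 := by
  have h := add_pow (1 - p) p i
  rw [sub_add_cancel, one_pow] at h
  exact (sum_congr rfl fun j _ => by ring).trans h.symm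

theorem le_of_eq_sum_range_succ_mul {w h : ℕ → ℝ} {B : ℝ} {i : ℕ}
    (hw : ∑ j ∈ range (i + 1), w j = 1) (hwi : w i < 1)
    (heq : h i = ∑ j ∈ range (i + 1), w j * h j)
    (hlow : 0 ≤ ∑ j ∈ range i, w j * (h j - B)) : B ≤ h i := by
  have hcentered : h i - B = ∑ j ∈ range (i + 1), w j * (h j - B) := by
    simp only [mul_sub, sum_sub_distrib, ← sum_mul, hw, ← heq, one_mul]
  rw [sum_range_succ] at hcentered
  have hprod : 0 ≤ (1 - w i) * (h i - B) := by linarith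
  exact sub_nonneg.1 (nonneg_of_mul_nonneg_right hprod (sub_pos.2 hwi))

theorem hitting_prob_two_eq {p : ℝ} (hp0 : p ≠ 0) (hp2 : p ≠ 2) {h : ℕ → ℝ} (h0 : h 0 = 0)
    (h1 : h 1 = 1)
    (hrec : h 2 = ∑ j ∈ range 3, ((2 : ℕ).choose j : ℝ) * p ^ (2 - j) * (1 - p) ^ j * h j) :
    h 2 = 2 * (1 - p) / (2 - p) := by
  simp only [sum_range_succ, range_one, sum_singleton, Nat.choose_zero_right, Nat.choose_one_right,
    Nat.choose_self, Nat.cast_one, Nat.cast_ofNat, tsub_zero, tsub_self, Nat.add_one_sub_one,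
    pow_zero, pow_one, one_mul, mul_one, mul_zero, zero_add, h0, h1] at hrec
  rw [eq_div_iff (sub_ne_zero.2 hp2.symm)]
  apply mul_left_cancel₀ hp0
  linear_combination hrec

theorem le_hitting_prob {p : ℝ} (hp : p ∈ Set.Ioo (0 : ℝ) 1) {h : ℕ → ℝ} (h0 : h 0 = 0)
    (h1 : h 1 = 1)
    (hrec : ∀ i, 2 ≤ i →
      h i = ∑ j ∈ range (i + 1), (i.choose j : ℝ) * p ^ (i - j) * (1 - p) ^ j * h j)
    (i : ℕ) (hi : 1 ≤ i) : 2 * (1 - p) / (2 - p) ≤ h i := by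
  obtain ⟨hp0, hp1⟩ := hp
  have hq : 0 < 1 - p := by linarith
  have h2p : 0 < 2 - p := by linarith
  induction i using Nat.strong_induction_on with
  | _ i IH =>
  rcases (show i = 1 ∨ 2 ≤ i by omega) with rfl | hi2
  · rw [h1, div_le_one h2p]
    linarith
  obtain ⟨k, rfl⟩ := Nat.exists_eq_add_of_le' hi2
  refine le_of_eq_sum_range_succ_mul (sum_range_choose_mul_pow_mul_one_sub_pow p _) ?_
    (hrec _ hi2) ?_
  · simpa using pow_lt_one₀ hq.le (by linarith) (by omega : k + 2 ≠ 0)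
  rw [sum_range_succ', sum_range_succ', add_assoc]
  refine add_nonneg (sum_nonneg fun j hj => mul_nonneg (by positivity) ?_) ?_
  · rw [mem_range] at hj
    exact sub_nonneg.2 (IH _ (by omega) (by omega))
  calc _ = (k : ℝ) * p ^ (k + 2) * (1 - p) / (2 - p) := by
        simp only [zero_add, Nat.choose_one_right, Nat.choose_zero_right, Nat.cast_add,
          Nat.cast_ofNat, Nat.cast_one, Nat.add_one_sub_one, tsub_zero, pow_one, pow_zero,
          mul_one, one_mul, h0, h1]
        field_simp
        ring
    _ ≥ 0 := by positivity

theorem hitting_prob_lower_bound (p : ℝ) (hp : p ∈ Set.Ioo (0:ℝ) 1)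
    (h : ℕ → ℝ) (h0 : h 0 = 0) (h1 : h 1 = 1)
    (hrec : ∀ i, 2 ≤ i →
      h i = ∑ j ∈ Finset.range (i + 1),
        (i.choose j : ℝ) * p ^ (i - j) * (1 - p) ^ j * h j) :
    (∀ i, 1 ≤ i → h i ≥ 2 * (1 - p) / (2 - p)) ∧ h 2 = 2 * (1 - p) / (2 - p) :=
  ⟨le_hitting_prob hp h0 h1 hrec,
    hitting_prob_two_eq hp.1.ne' (hp.2.trans one_lt_two).ne h0 h1 (hrec 2 le_rfl)⟩
end
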